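/- arXiv:1607.05064 — 6 statements merged into one kernel-verified Lean document; each statement's English description precedes it below -/
import Mathlib

section
/- The 5×5 circulant matrix with first row (1, α, 0, 0, α) with α = 2^{-1/ρ} (ρ > 0) is positive semidefinite if and only if ρ ≤ log 2 / log(2 cos(π/5)). -/
/-!
Write `φ = (1 + √5) / 2 = 2 cos (π / 5)`. The matrix is `1 + α A` with `A` the adjacency matrix of
the 5-cycle, whose least eigenvalue is `2 cos (4π / 5) = -φ`. Concretely, the quadratic form
`φ ∑ xᵢ² + 2 ∑ xᵢ xᵢ₊₁` of `φ + A` is a sum of three squares and vanishes at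
`v = (2, -φ, φ - 1, φ - 1, -φ)`. Hence the matrix is positive semidefinite iff `α φ ≤ 1`, which
for `α = 2 ^ (-1 / ρ)` is `ρ log φ ≤ log 2`.
-/

open Matrix Real goldenRatio

theorem circulant_cycle_apply (α : ℝ) (i j : Fin 5) :
    circulant ![1, α, 0, 0, α] i j =
      if i = j then 1
      else if ((i : ZMod 5) - (j : ZMod 5) = 1 ∨ (i : ZMod 5) - (j : ZMod 5) = -1) then α
      else 0 := by
  fin_cases i <;> fin_cases j <;> simp +decide

theorem isHermitian_circulant_cycle (α : ℝ) : (circulant ![1, α, 0, 0, α]).IsHermitian :=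
  isHermitian_iff_isSymm.2 <| Fin.circulant_isSymm_iff.2 fun i => by fin_cases i <;> rfl

theorem Fin.sum_univ_five_mul_succ (x : Fin 5 → ℝ) :
    ∑ i, x i * x (i + 1) = x 0 * x 1 + x 1 * x 2 + x 2 * x 3 + x 3 * x 4 + x 4 * x 0 := by
  rw [Fin.sum_univ_five]
  rfl

theorem circulant_cycle_dotProduct_mulVec (α : ℝ) (x : Fin 5 → ℝ) :
    star x ⬝ᵥ (circulant ![1, α, 0, 0, α] *ᵥ x) =
      ∑ i, x i ^ 2 + 2 * α * ∑ i, x i * x (i + 1) := by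
  simp only [dotProduct, Pi.star_apply, star_trivial, mulVec, circulant_apply, Fin.sum_univ_five,
    Fin.isValue, sub_zero, cons_val_zero, one_mul, zero_sub, cons_val, zero_mul, add_zero,
    cons_val_one, sub_self, Fin.reduceSub, zero_add, Fin.reduceAdd]
  ring

theorem goldenRatio_mul_sum_sq_add_two_mul_sum_cycle_nonneg (x : Fin 5 → ℝ) :
    0 ≤ φ * ∑ i, x i ^ 2 + 2 * ∑ i, x i * x (i + 1) := by
  have hφ : 1 < φ := one_lt_goldenRatio
  have hφsq : φ ^ 2 = φ + 1 := goldenRatio_sq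
  -- `φ` is an abbreviation: generalize it so that `ring` does not unfold it into `√5`.
  generalize φ = t at hφ hφsq ⊢
  have hsos : t * ∑ i, x i ^ 2 + 2 * ∑ i, x i * x (i + 1) =
      t * (x 0 + (t - 1) * (x 1 + x 4)) ^ 2 + (x 1 + x 2 - (t - 1) * x 4) ^ 2 +
        (t - 1) * (x 2 + t * x 3 + x 4) ^ 2 := by
    rw [Fin.sum_univ_five, Fin.sum_univ_five_mul_succ]
    linear_combination (-2 * (x 0 * x 1 + x 0 * x 4 + x 2 * x 3 + x 3 * x 4)
      - t * (x 3 ^ 2 + x 4 ^ 2) - (t - 1) * (x 1 ^ 2 + 2 * x 1 * x 4)) * hφsq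
  have ht : 0 ≤ t - 1 := by linarith
  rw [hsos]
  positivity

theorem circulant_cycle_dotProduct_mulVec_eigenvector (α : ℝ) :
    star ![2, -φ, φ - 1, φ - 1, -φ] ⬝ᵥ
        (circulant ![1, α, 0, 0, α] *ᵥ ![2, -φ, φ - 1, φ - 1, -φ]) = 10 * (1 - α * φ) := by
  rw [circulant_cycle_dotProduct_mulVec, Fin.sum_univ_five, Fin.sum_univ_five_mul_succ]
  simp only [Matrix.cons_val]
  have hφsq : φ ^ 2 = φ + 1 := goldenRatio_sq
  generalize φ = t at hφsq ⊢
  linear_combination (4 - 2 * α) * hφsq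

theorem posSemidef_circulant_cycle_iff {α : ℝ} (hα : 0 ≤ α) :
    (circulant ![1, α, 0, 0, α]).PosSemidef ↔ α * φ ≤ 1 := by
  rw [posSemidef_iff_dotProduct_mulVec]
  constructor
  · rintro ⟨-, hnonneg⟩
    have hv := hnonneg ![2, -φ, φ - 1, φ - 1, -φ]
    rw [circulant_cycle_dotProduct_mulVec_eigenvector] at hv
    linarith
  · refine fun hαφ => ⟨isHermitian_circulant_cycle α, fun x => ?_⟩
    rw [circulant_cycle_dotProduct_mulVec]
    have hform := goldenRatio_mul_sum_sq_add_two_mul_sum_cycle_nonneg x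
    have hsq : 0 ≤ ∑ i, x i ^ 2 := by positivity
    nlinarith [mul_nonneg hα hform, mul_nonneg (sub_nonneg.2 hαφ) hsq]

theorem rpow_neg_one_div_mul_le_one_iff {b c ρ : ℝ} (hb : 0 < b) (hc : 1 < c) (hρ : 0 < ρ) :
    b ^ (-(1 / ρ)) * c ≤ 1 ↔ ρ ≤ log b / log c := by
  rw [← log_nonpos_iff (by positivity), log_mul (by positivity) (by positivity), log_rpow hb,
    le_div_iff₀ (log_pos hc), neg_mul, neg_add_nonpos_iff, one_div_mul_eq_div, le_div_iff₀ hρ,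
    mul_comm]

/-- The circulant matrix with first row (1, α, 0, 0, α), α = 2^{-1/ρ}, ρ > 0, is
positive semidefinite iff ρ ≤ log 2 / log(2 cos(π/5)). -/
theorem stmt1 (ρ : ℝ) (hρ : 0 < ρ) (M : Matrix (Fin 5) (Fin 5) ℝ)
    (hM : ∀ i j : Fin 5, M i j =
      if i = j then 1
      else if ((i : ZMod 5) - (j : ZMod 5) = 1 ∨ (i : ZMod 5) - (j : ZMod 5) = -1)
        then (2 : ℝ) ^ (-(1 / ρ)) else 0) :
    M.PosSemidef ↔ ρ ≤ Real.log 2 / Real.log (2 * Real.cos (Real.pi / 5)) := by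
  have hMc : M = circulant ![1, 2 ^ (-(1 / ρ)), 0, 0, 2 ^ (-(1 / ρ))] :=
    ext fun i j => (hM i j).trans (circulant_cycle_apply _ i j).symm
  have hcos : 2 * cos (π / 5) = φ := by
    rw [cos_pi_div_five]
    ring
  rw [hMc, hcos, posSemidef_circulant_cycle_iff (by positivity),
    rpow_neg_one_div_mul_le_one_iff two_pos one_lt_goldenRatio hρ]
end

section
/- Let g₁ : Z_q → ℝ (q odd, q ≥ 3) be defined by g₁(0) = 1, g₁(±1) = φ with φ = 1/(2cos(π/q)), and g₁(x) = 0 otherwise. Then its Fourier transform ĝ₁(ω) = Σ_x g₁(x)·e^{2πiωx/q} = 1 + 2φ·cos(2πω/q) is real, nonnegative for all ω ∈ Z_q, and equals 0 exactly at ω = ±(q−1)/2. -/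
/-!
The two characters at `x = ±1` are complex conjugate, so `ĝ₁(ω) = 1 + 2φ cos(2πω/q)`.
Representing `ω` by `ω.valMinAbs ∈ (-q/2, q/2]`, the value `cos(2πω/q)` is strictly decreasing
in `|ω.valMinAbs| ≤ q/2`, so its minimum over `Z_q` is attained exactly at `ω = ±⌊q/2⌋`, where
for odd `q` it equals `cos(π - π/q) = -cos(π/q)`. Hence
`ĝ₁(ω) = (cos(2πω/q) + cos(π/q)) / cos(π/q)` is nonnegative and vanishes exactly there.
-/

/-- Lovász' one-dimensional assignment on Z_q: g₁(0) = 1, g₁(±1) = 1/(2cos(π/q)),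
g₁(x) = 0 otherwise. -/
noncomputable def g1 (q : ℕ) (x : ZMod q) : ℝ :=
  if x = 0 then 1 else if x = 1 ∨ x = -1 then 1 / (2 * Real.cos (Real.pi / q)) else 0

open Real

section

variable {q : ℕ} [NeZero q]

lemma strictAntiOn_cos_two_pi_mul_div :
    StrictAntiOn (fun m : ℕ => cos (2 * π * m / q)) (Set.Iic (q / 2)) := by
  have hq : (0 : ℝ) < q := Nat.cast_pos.2 (Nat.pos_of_neZero q)
  have hmem : ∀ m ∈ Set.Iic (q / 2), 2 * π * m / q ∈ Set.Icc 0 π := fun m hm => by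
    have : (m * 2 : ℝ) ≤ q := by exact_mod_cast (Nat.le_div_iff_mul_le two_pos).1 hm
    constructor
    · positivity
    · rw [div_le_iff₀ hq]
      nlinarith [pi_pos]
  intro a ha b hb hab
  refine strictAntiOn_cos (hmem a ha) (hmem b hb) ?_
  gcongr

namespace ZMod

lemma re_toCircle (ω : ZMod q) : (toCircle ω : ℂ).re = cos (2 * π * ω.val / q) := by
  rw [toCircle_apply, ← Complex.exp_ofReal_mul_I_re]
  push_cast
  ring_nf

lemma exp_val_add_exp_neg_val (ω : ZMod q) :
    Complex.exp (2 * π * Complex.I * ω.val / q) + Complex.exp (2 * π * Complex.I * (-ω).val / q) =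
      ((2 * cos (2 * π * ω.val / q) : ℝ) : ℂ) := by
  rw [← toCircle_apply, ← toCircle_apply, AddChar.map_neg_eq_inv, Circle.coe_inv_eq_conj,
    Complex.add_conj, re_toCircle]

lemma cos_two_pi_val_div_eq_natAbs_valMinAbs (ω : ZMod q) :
    cos (2 * π * ω.val / q) = cos (2 * π * ω.valMinAbs.natAbs / q) := by
  have h := toCircle_intCast (N := q) ω.valMinAbs
  rw [coe_valMinAbs] at h
  have habs : 2 * π * (ω.valMinAbs.natAbs : ℝ) / q = |2 * π * ω.valMinAbs / q| := by
    rw [abs_div, abs_mul, abs_of_pos two_pi_pos, Nat.abs_cast, Nat.cast_natAbs, Int.cast_abs]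
  rw [habs, cos_abs, ← re_toCircle, h, ← Complex.exp_ofReal_mul_I_re]
  push_cast
  ring_nf

lemma cos_two_pi_half_div_le (ω : ZMod q) :
    cos (2 * π * (q / 2 : ℕ) / q) ≤ cos (2 * π * ω.val / q) := by
  rw [cos_two_pi_val_div_eq_natAbs_valMinAbs]
  exact strictAntiOn_cos_two_pi_mul_div.antitoneOn (natAbs_valMinAbs_le ω) Set.self_mem_Iic
    (natAbs_valMinAbs_le ω)

lemma cos_two_pi_val_div_eq_cos_half_iff (ω : ZMod q) :
    cos (2 * π * ω.val / q) = cos (2 * π * (q / 2 : ℕ) / q) ↔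
      ω = (q / 2 : ℕ) ∨ ω = -(q / 2 : ℕ) := by
  rw [cos_two_pi_val_div_eq_natAbs_valMinAbs,
    strictAntiOn_cos_two_pi_mul_div.injOn.eq_iff (natAbs_valMinAbs_le ω) Set.self_mem_Iic,
    ← natAbs_valMinAbs_eq_natAbs_valMinAbs, valMinAbs_natCast_of_le_half le_rfl,
    Int.natAbs_natCast]

lemma sum_mul_exp_of_support_subset [Fact (2 < q)] (f : ZMod q → ℝ)
    (hf : Function.support f ⊆ ({0, 1, -1} : Finset (ZMod q))) (hsymm : f (-1) = f 1)
    (ω : ZMod q) :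
    ∑ x, (f x : ℂ) * Complex.exp (2 * π * Complex.I * (ω * x).val / q) =
      ((f 0 + 2 * f 1 * cos (2 * π * ω.val / q) : ℝ) : ℂ) := by
  have hne : (1 : ZMod q) ≠ -1 := neg_one_ne_one.symm
  have h10 : (1 : ZMod q) ≠ 0 := fun h => hne (by rw [h, neg_zero])
  have hne0 : (0 : ZMod q) ∉ ({1, -1} : Finset (ZMod q)) := by
    simp [eq_comm (a := (0 : ZMod q)), h10]
  have hvanish : ∀ x ∈ Finset.univ, x ∉ ({0, 1, -1} : Finset (ZMod q)) →
      (f x : ℂ) * Complex.exp (2 * π * Complex.I * (ω * x).val / q) = 0 := fun x _ hx => by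
    rw [Function.notMem_support.1 (fun h => hx (hf h)), Complex.ofReal_zero, zero_mul]
  rw [← Finset.sum_subset (Finset.subset_univ _) hvanish, Finset.sum_insert hne0,
    Finset.sum_pair hne, mul_zero, mul_one, mul_neg_one, hsymm, val_zero, Nat.cast_zero, mul_zero,
    zero_div, Complex.exp_zero, ← mul_add, exp_val_add_exp_neg_val]
  push_cast
  ring

end ZMod

end

lemma cos_two_pi_half_div_of_odd {q : ℕ} (hq : Odd q) :
    cos (2 * π * (q / 2 : ℕ) / q) = -cos (π / q) := by
  obtain ⟨k, rfl⟩ := hq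
  rw [show (2 * k + 1) / 2 = k by omega, ← cos_pi_sub]
  congr 1
  field_simp
  push_cast
  ring

lemma cos_pi_div_pos {q : ℕ} (hq : 2 < q) : 0 < cos (π / q) := by
  have hq' : (2 : ℝ) < q := by exact_mod_cast hq
  apply cos_pos_of_mem_Ioo
  constructor
  · linarith [div_pos pi_pos (by linarith : (0 : ℝ) < q), pi_pos]
  · exact div_lt_div_of_pos_left pi_pos two_pos hq'

lemma g1_zero (q : ℕ) : g1 q 0 = 1 := if_pos rfl

lemma g1_one {q : ℕ} [Fact (1 < q)] : g1 q 1 = 1 / (2 * cos (π / q)) := by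
  simp [g1]

lemma g1_neg_one (q : ℕ) : g1 q (-1) = g1 q 1 := by
  simp [g1]

lemma support_g1_subset (q : ℕ) :
    Function.support (g1 q) ⊆ ({0, 1, -1} : Finset (ZMod q)) := by
  intro x hx
  contrapose! hx
  simp_all [g1]

/-- For q odd ≥ 3, the Fourier transform of g₁ equals the real number
1 + 2φ cos(2πω/q) (φ = 1/(2cos(π/q))), is nonnegative, and vanishes exactly at
ω = ±(q−1)/2. -/
theorem stmt7 (q : ℕ) [NeZero q] (hq : Odd q) (hq3 : 3 ≤ q) :
    (∀ ω : ZMod q,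
      (∑ x : ZMod q, (g1 q x : ℂ) *
          Complex.exp (2 * Real.pi * Complex.I * (((ω * x).val : ℕ) : ℂ) / q)) =
        ((1 + 2 * (1 / (2 * Real.cos (Real.pi / q))) *
            Real.cos (2 * Real.pi * ((ω.val : ℕ) : ℝ) / q) : ℝ) : ℂ)) ∧
    (∀ ω : ZMod q,
      0 ≤ 1 + 2 * (1 / (2 * Real.cos (Real.pi / q))) *
            Real.cos (2 * Real.pi * ((ω.val : ℕ) : ℝ) / q)) ∧
    (∀ ω : ZMod q,
      ((∑ x : ZMod q, (g1 q x : ℂ) *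
          Complex.exp (2 * Real.pi * Complex.I * (((ω * x).val : ℕ) : ℂ) / q)) = 0 ↔
        ω = (((q - 1) / 2 : ℕ) : ZMod q) ∨ ω = -(((q - 1) / 2 : ℕ) : ZMod q))) := by
  have : Fact (2 < q) := ⟨hq3⟩
  have : Fact (1 < q) := ⟨by omega⟩
  have hcos := cos_pi_div_pos hq3
  have hfourier (ω : ZMod q) := ZMod.sum_mul_exp_of_support_subset (g1 q) (support_g1_subset q)
    (g1_neg_one q) ω
  rw [g1_zero, g1_one] at hfourier
  have hvalue (ω : ZMod q) : 1 + 2 * (1 / (2 * cos (π / q))) * cos (2 * π * ω.val / q) =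
      (cos (2 * π * ω.val / q) - cos (2 * π * (q / 2 : ℕ) / q)) / cos (π / q) := by
    rw [cos_two_pi_half_div_of_odd hq]
    field_simp
    ring
  have hhalf : (q - 1) / 2 = q / 2 := by
    obtain ⟨k, rfl⟩ := hq
    omega
  refine ⟨hfourier, fun ω => ?_, fun ω => ?_⟩
  · rw [hvalue]
    exact div_nonneg (sub_nonneg.2 (ZMod.cos_two_pi_half_div_le ω)) hcos.le
  · rw [hfourier, Complex.ofReal_eq_zero, hvalue, div_eq_zero_iff, or_iff_left hcos.ne',
      sub_eq_zero, ZMod.cos_two_pi_val_div_eq_cos_half_iff, hhalf]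
end

section
/- Let C ⊆ Z_q^n and let f : Z_q^n → ℝ satisfy f(x₁ − x₂) ≤ 0 for all distinct x₁, x₂ ∈ C, f̂(ω) ≥ 0 for all ω, and f̂(0) > 0. Then |C| ≤ q^n · f(0)/f̂(0). -/
open Finset Complex

section aux

variable (q n : ℕ) [NeZero q]

private lemma psi_sum {ι : Type*} (s : Finset ι) (g : ι → ZMod q) :
    ZMod.stdAddChar (∑ k ∈ s, g k) = ∏ k ∈ s, ZMod.stdAddChar (g k) := by
  classical
  induction s using Finset.cons_induction with
  | empty => simp [AddChar.map_zero_eq_one]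
  | cons a s ha ih =>
    rw [Finset.sum_cons, Finset.prod_cons, AddChar.map_add_eq_mul, ih]

private lemma psi_conj (a : ZMod q) :
    (starRingEnd ℂ) (ZMod.stdAddChar a) = ZMod.stdAddChar (-a) := by
  rw [ZMod.stdAddChar_apply, ZMod.stdAddChar_apply, ← Circle.coe_inv_eq_conj,
    ← AddChar.map_neg_eq_inv]

/-- orthogonality on the product group -/
private lemma orth (z : Fin n → ZMod q) :
    ∑ ω : Fin n → ZMod q, ZMod.stdAddChar (∑ k, ω k * z k)
      = if z = 0 then ((q : ℂ)) ^ n else 0 := by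
  classical
  have h1 (t : ZMod q) : ∑ i : ZMod q, ZMod.stdAddChar (i * t) = if t = 0 then (q : ℂ) else 0 := by
    split_ifs with h
    · simp [h, AddChar.map_zero_eq_one, ZMod.card]
    · have := AddChar.sum_eq_zero_of_ne_one (ZMod.isPrimitive_stdAddChar q h)
      simpa [AddChar.mulShift_apply, mul_comm] using this
  calc ∑ ω : Fin n → ZMod q, ZMod.stdAddChar (∑ k, ω k * z k)
      = ∑ ω : Fin n → ZMod q, ∏ k, ZMod.stdAddChar (ω k * z k) := by
        simp_rw [psi_sum]
    _ = ∏ k, ∑ i : ZMod q, ZMod.stdAddChar (i * z k) := by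
        rw [Finset.prod_univ_sum, Fintype.piFinset_univ]
    _ = ∏ k, (if z k = 0 then (q : ℂ) else 0) := by simp_rw [h1]
    _ = if z = 0 then ((q : ℂ)) ^ n else 0 := by
        split_ifs with h
        · simp [h]
        · obtain ⟨k, hk⟩ : ∃ k, z k ≠ 0 := by
            by_contra hc; push_neg at hc; exact h (funext hc)
          exact Finset.prod_eq_zero (Finset.mem_univ k) (by simp [hk])

end aux

/-- Delsarte's linear programming bound via the Plancherel identity: if f̂ ≥ 0,
f̂(0) > 0, and f(x₁ − x₂) ≤ 0 for all distinct codewords x₁, x₂ ∈ C, then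
|C| ≤ qⁿ · f(0)/f̂(0). -/
theorem stmt9 (q n : ℕ) [NeZero q] (C : Finset (Fin n → ZMod q)) (f : (Fin n → ZMod q) → ℝ)
    (fhat : (Fin n → ZMod q) → ℂ)
    (hfhat : ∀ ω, fhat ω = ∑ x : Fin n → ZMod q, (f x : ℂ) *
        Complex.exp (2 * Real.pi * Complex.I * ((((∑ k, ω k * x k : ZMod q)).val : ℂ)) / q))
    (hpos : ∀ ω, 0 ≤ (fhat ω).re ∧ (fhat ω).im = 0)
    (h0 : 0 < (fhat 0).re)
    (hC : ∀ x₁ ∈ C, ∀ x₂ ∈ C, x₁ ≠ x₂ → f (x₁ - x₂) ≤ 0) :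
    (C.card : ℝ) ≤ (q : ℝ) ^ n * f 0 / (fhat 0).re := by
  classical
  set ψ : AddChar (ZMod q) ℂ := ZMod.stdAddChar with hψdef
  -- rewrite the exponential as the standard additive character
  have hexp : ∀ ω x : Fin n → ZMod q,
      Complex.exp (2 * Real.pi * Complex.I * ((((∑ k, ω k * x k : ZMod q)).val : ℂ)) / q)
        = ψ (∑ k, ω k * x k) := by
    intro ω x
    rw [hψdef, ZMod.stdAddChar_apply, ZMod.toCircle_apply]
  have hfhat' : ∀ ω, fhat ω = ∑ x : Fin n → ZMod q, (f x : ℂ) * ψ (∑ k, ω k * x k) := by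
    intro ω; rw [hfhat ω]; exact Finset.sum_congr rfl fun x _ => by rw [hexp]
  -- bilinearity of the pairing
  have hbil : ∀ ω x y : Fin n → ZMod q,
      ψ (∑ k, ω k * (x + y) k) = ψ (∑ k, ω k * x k) * ψ (∑ k, ω k * y k) := by
    intro ω x y
    rw [← AddChar.map_add_eq_mul, ← Finset.sum_add_distrib]
    congr 1
    exact Finset.sum_congr rfl fun k _ => by simp [mul_add]
  have hconj : ∀ ω x : Fin n → ZMod q,
      (starRingEnd ℂ) (ψ (∑ k, ω k * x k)) = ψ (∑ k, ω k * (-x) k) := by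
    intro ω x
    rw [hψdef, psi_conj]
    congr 1
    rw [← Finset.sum_neg_distrib]
    exact Finset.sum_congr rfl fun k _ => by simp
  -- f 0 is nonnegative (used for the empty-code case)
  have hf0 : 0 ≤ f 0 := by
    have hsum : ∑ ω : Fin n → ZMod q, fhat ω = ((q : ℂ)) ^ n * (f 0 : ℂ) := by
      calc ∑ ω : Fin n → ZMod q, fhat ω
          = ∑ ω : Fin n → ZMod q, ∑ x : Fin n → ZMod q, (f x : ℂ) * ψ (∑ k, ω k * x k) := by
            simp_rw [hfhat']
        _ = ∑ x : Fin n → ZMod q, (f x : ℂ) * ∑ ω : Fin n → ZMod q, ψ (∑ k, ω k * x k) := by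
            rw [Finset.sum_comm]; simp_rw [Finset.mul_sum]
        _ = ∑ x : Fin n → ZMod q, (f x : ℂ) * (if x = 0 then ((q : ℂ)) ^ n else 0) := by
            simp_rw [hψdef, orth]
        _ = ((q : ℂ)) ^ n * (f 0 : ℂ) := by
            simp [mul_ite, mul_zero, Finset.sum_ite_eq', mul_comm]
    have hre : (0:ℝ) ≤ (((q : ℂ)) ^ n * (f 0 : ℂ)).re := by
      rw [← hsum, Complex.re_sum]
      exact Finset.sum_nonneg fun ω _ => (hpos ω).1
    have heq : (((q : ℂ)) ^ n * (f 0 : ℂ)).re = (q : ℝ) ^ n * f 0 := by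
      rw [show ((q:ℂ))^n = ((((q:ℝ))^n : ℝ) : ℂ) by push_cast; ring,
        ← Complex.ofReal_mul, Complex.ofReal_re]
    rw [heq] at hre
    have hqpos : (0:ℝ) < (q : ℝ) ^ n :=
      pow_pos (by exact_mod_cast Nat.pos_of_ne_zero (NeZero.ne q)) n
    nlinarith
  rcases Finset.eq_empty_or_nonempty C with hCe | hCne
  · subst hCe
    simp only [Finset.card_empty, Nat.cast_zero]
    exact div_nonneg (mul_nonneg (by positivity) hf0) h0.le
  -- main case
  set χ : (Fin n → ZMod q) → ℂ := fun ω => ∑ x ∈ C, ψ (∑ k, ω k * x k) with hχdef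
  have hχconj : ∀ ω, (starRingEnd ℂ) (χ ω) = ∑ x ∈ C, ψ (∑ k, ω k * (-x) k) := by
    intro ω
    rw [hχdef]
    rw [map_sum]
    exact Finset.sum_congr rfl fun x _ => hconj ω x
  set T : ℂ := ∑ ω : Fin n → ZMod q, fhat ω * (χ ω * (starRingEnd ℂ) (χ ω)) with hTdef
  -- each term is real and nonnegative
  have hterm : ∀ ω, (fhat ω * (χ ω * (starRingEnd ℂ) (χ ω))).re
      = (fhat ω).re * Complex.normSq (χ ω) ∧
      (0:ℝ) ≤ (fhat ω * (χ ω * (starRingEnd ℂ) (χ ω))).re := by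
    intro ω
    have h1 : χ ω * (starRingEnd ℂ) (χ ω) = (Complex.normSq (χ ω) : ℂ) := by
      rw [Complex.mul_conj]
    rw [h1]
    constructor
    · simp [Complex.mul_re, (hpos ω).2]
    · simp only [Complex.mul_re, (hpos ω).2]
      simp only [Complex.ofReal_re, Complex.ofReal_im, zero_mul, mul_zero, sub_zero]
      exact mul_nonneg (hpos ω).1 (Complex.normSq_nonneg _)
  -- lower bound: T.re ≥ fhat(0).re * |C|²
  have hχ0 : χ 0 = (C.card : ℂ) := by
    rw [hχdef]
    simp [AddChar.map_zero_eq_one]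
  have hlow : (fhat 0).re * (C.card : ℝ) ^ 2 ≤ T.re := by
    have : T.re = ∑ ω : Fin n → ZMod q, (fhat ω * (χ ω * (starRingEnd ℂ) (χ ω))).re := by
      rw [hTdef, Complex.re_sum]
    rw [this]
    have h00 : (fhat 0 * (χ 0 * (starRingEnd ℂ) (χ 0))).re = (fhat 0).re * (C.card : ℝ) ^ 2 := by
      rw [(hterm 0).1, hχ0, Complex.normSq_natCast]
      push_cast; ring
    calc (fhat 0).re * (C.card : ℝ) ^ 2
        = (fhat 0 * (χ 0 * (starRingEnd ℂ) (χ 0))).re := h00.symm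
      _ ≤ ∑ ω : Fin n → ZMod q, (fhat ω * (χ ω * (starRingEnd ℂ) (χ ω))).re :=
          Finset.single_le_sum (fun ω _ => (hterm ω).2) (Finset.mem_univ 0)
  -- compute T
  have hTval : T = ((q : ℂ)) ^ n * ∑ x₁ ∈ C, ∑ x₂ ∈ C, (f (x₂ - x₁) : ℂ) := by
    have step : ∀ ω, fhat ω * (χ ω * (starRingEnd ℂ) (χ ω))
        = ∑ x₁ ∈ C, ∑ x₂ ∈ C, ∑ y : Fin n → ZMod q,
            (f y : ℂ) * ψ (∑ k, ω k * (y + (x₁ - x₂)) k) := by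
      intro ω
      rw [hχconj ω]
      have hmm : χ ω * ∑ x ∈ C, ψ (∑ k, ω k * (-x) k)
          = ∑ x₁ ∈ C, ∑ x₂ ∈ C, ψ (∑ k, ω k * x₁ k) * ψ (∑ k, ω k * (-x₂) k) := by
        rw [hχdef]; exact Finset.sum_mul_sum _ _ _ _
      rw [hmm, Finset.mul_sum]
      refine Finset.sum_congr rfl fun x₁ _ => ?_
      rw [Finset.mul_sum]
      refine Finset.sum_congr rfl fun x₂ _ => ?_
      rw [hfhat' ω, Finset.sum_mul]
      refine Finset.sum_congr rfl fun y _ => ?_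
      have h1 : y + (x₁ - x₂) = (y + x₁) + (-x₂) := by abel
      rw [h1, hbil ω (y + x₁) (-x₂), hbil ω y x₁]
      ring
    calc T = ∑ ω : Fin n → ZMod q, ∑ x₁ ∈ C, ∑ x₂ ∈ C, ∑ y : Fin n → ZMod q,
            (f y : ℂ) * ψ (∑ k, ω k * (y + (x₁ - x₂)) k) := by
          rw [hTdef]; exact Finset.sum_congr rfl fun ω _ => step ω
      _ = ∑ x₁ ∈ C, ∑ x₂ ∈ C, ∑ y : Fin n → ZMod q,
            (f y : ℂ) * ∑ ω : Fin n → ZMod q, ψ (∑ k, ω k * (y + (x₁ - x₂)) k) := by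
          rw [Finset.sum_comm]
          refine Finset.sum_congr rfl fun x₁ _ => ?_
          rw [Finset.sum_comm]
          refine Finset.sum_congr rfl fun x₂ _ => ?_
          rw [Finset.sum_comm]
          exact Finset.sum_congr rfl fun y _ => by rw [Finset.mul_sum]
      _ = ∑ x₁ ∈ C, ∑ x₂ ∈ C, ∑ y : Fin n → ZMod q,
            (f y : ℂ) * (if y + (x₁ - x₂) = 0 then ((q : ℂ)) ^ n else 0) := by
          simp_rw [hψdef, orth]
      _ = ((q : ℂ)) ^ n * ∑ x₁ ∈ C, ∑ x₂ ∈ C, (f (x₂ - x₁) : ℂ) := by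
          rw [Finset.mul_sum]
          refine Finset.sum_congr rfl fun x₁ _ => ?_
          rw [Finset.mul_sum]
          refine Finset.sum_congr rfl fun x₂ _ => ?_
          have heq : ∀ y : Fin n → ZMod q, (y + (x₁ - x₂) = 0) ↔ (y = x₂ - x₁) := by
            intro y; rw [add_eq_zero_iff_eq_neg, neg_sub]
          simp_rw [heq]
          simp [mul_ite, mul_zero, Finset.sum_ite_eq', mul_comm]
  -- upper bound on the double sum
  have hS : ∑ x₁ ∈ C, ∑ x₂ ∈ C, f (x₂ - x₁) ≤ (C.card : ℝ) * f 0 := by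
    calc ∑ x₁ ∈ C, ∑ x₂ ∈ C, f (x₂ - x₁)
        ≤ ∑ _x₁ ∈ C, f 0 := by
          refine Finset.sum_le_sum fun x₁ hx₁ => ?_
          have : ∑ x₂ ∈ C, f (x₂ - x₁)
              = f (x₁ - x₁) + ∑ x₂ ∈ C.erase x₁, f (x₂ - x₁) := by
            rw [← Finset.add_sum_erase C _ hx₁]
          rw [this, sub_self]
          have : ∑ x₂ ∈ C.erase x₁, f (x₂ - x₁) ≤ 0 := by
            refine Finset.sum_nonpos fun x₂ hx₂ => ?_
            exact hC x₂ (Finset.mem_of_mem_erase hx₂) x₁ hx₁ (Finset.ne_of_mem_erase hx₂)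
          linarith
      _ = (C.card : ℝ) * f 0 := by rw [Finset.sum_const, nsmul_eq_mul]
  -- take real parts of hTval
  have hTre : T.re = (q : ℝ) ^ n * ∑ x₁ ∈ C, ∑ x₂ ∈ C, f (x₂ - x₁) := by
    rw [hTval]
    have : (∑ x₁ ∈ C, ∑ x₂ ∈ C, (f (x₂ - x₁) : ℂ))
        = ((∑ x₁ ∈ C, ∑ x₂ ∈ C, f (x₂ - x₁) : ℝ) : ℂ) := by
      push_cast; rfl
    rw [this]
    have : ((q : ℂ)) ^ n = (((q : ℝ) ^ n : ℝ) : ℂ) := by push_cast; rfl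
    rw [this, ← Complex.ofReal_mul, Complex.ofReal_re]
  -- combine
  have hcard : (0:ℝ) < (C.card : ℝ) := by
    exact_mod_cast Nat.pos_of_ne_zero (Finset.card_ne_zero_of_mem hCne.choose_spec)
  have hqpos : (0:ℝ) < (q : ℝ) ^ n :=
    pow_pos (by exact_mod_cast Nat.pos_of_ne_zero (NeZero.ne q)) n
  have hkey : (fhat 0).re * (C.card : ℝ) ^ 2 ≤ (q : ℝ) ^ n * ((C.card : ℝ) * f 0) := by
    calc (fhat 0).re * (C.card : ℝ) ^ 2 ≤ T.re := hlow
      _ = (q : ℝ) ^ n * ∑ x₁ ∈ C, ∑ x₂ ∈ C, f (x₂ - x₁) := hTre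
      _ ≤ (q : ℝ) ^ n * ((C.card : ℝ) * f 0) := by
          exact mul_le_mul_of_nonneg_left hS (le_of_lt hqpos)
  rw [le_div_iff₀ h0]
  nlinarith [hkey, hcard, h0]
end

section
/- For q odd ≥ 3, c = (q−1)/2, and x ∈ Z_q^n lying in the sphere S_u^1 = {x : exactly u coordinates equal ±1 and the remaining n−u equal 0}, the Fourier transform of the indicator of S_ℓ^c = {ω : exactly ℓ coordinates equal ±c, rest 0} evaluated at x equals Σ_{j=0}^{ℓ} C(u,j)·C(n−u, ℓ−j)·(−1)^j · 2^ℓ · (cos(π/q))^j, where C denotes binomial coefficients. -/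
open scoped Classical

/-!
With `ψ = ZMod.stdAddChar`, each summand factors as `∏ i, ψ (ω i * x i)`, and `ψ 0 = 1`. Marking
every nonzero coordinate of `ω` by a variable `X`, the sum over all `ω` with `ℓ` nonzero entries
in `{c, -c}` is the coefficient of `X ^ ℓ` in `∏ i, (1 + (ψ (c * x i) + ψ (-c * x i)) X)`.
Since `2c + 1 = q`, we get `ψ c + ψ (-c) = 2 cos (π - π / q) = -2 cos (π / q)`, so the product is
`(1 - 2 cos (π / q) X) ^ u * (1 + 2 X) ^ (n - u)`, and expanding both binomials gives the sum.
-/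

open Finset Polynomial

theorem AddChar.map_sum_eq_prod {A M ι : Type*} [AddCommMonoid A] [CommMonoid M]
    (ψ : AddChar A M) (s : Finset ι) (f : ι → A) :
    ψ (∑ i ∈ s, f i) = ∏ i ∈ s, ψ (f i) :=
  map_prod ψ.toMonoidHom (fun i => Multiplicative.ofAdd (f i)) s

theorem Fintype.prod_ite_eq_pow_mul_pow {ι M : Type*} [Fintype ι] [CommMonoid M] (p : ι → Prop)
    [DecidablePred p] (a b : M) :
    ∏ i, (if p i then a else b) = a ^ #{i | p i} * b ^ (Fintype.card ι - #{i | p i}) := by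
  rw [prod_ite, prod_const, prod_const, filter_not, card_sdiff_of_subset (filter_subset _ _),
    card_univ]

theorem Polynomial.coeff_one_add_C_mul_X_pow {R : Type*} [CommSemiring R] (a : R) (m k : ℕ) :
    ((1 + C a * X) ^ m).coeff k = m.choose k * a ^ k := by
  rw [add_comm, add_pow, finsetSum_coeff]
  simp only [one_pow, mul_one, mul_pow, ← C_pow, ← C_eq_natCast, mul_assoc, coeff_C_mul,
    coeff_mul_C, coeff_X_pow, ite_mul, one_mul, zero_mul, mul_ite, mul_zero, sum_ite_eq,
    mem_range, Nat.lt_succ_iff]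
  split_ifs with hk
  · ring
  · rw [Nat.choose_eq_zero_of_lt (not_le.mp hk), Nat.cast_zero, zero_mul]

theorem Polynomial.coeff_one_add_C_mul_X_pow_mul_one_add_C_mul_X_pow {R : Type*} [CommSemiring R]
    (a b : R) (u v ℓ : ℕ) :
    ((1 + C a * X) ^ u * (1 + C b * X) ^ v).coeff ℓ =
      ∑ j ∈ range (ℓ + 1), u.choose j * v.choose (ℓ - j) * a ^ j * b ^ (ℓ - j) := by
  rw [coeff_mul, Nat.sum_antidiagonal_eq_sum_range_succ_mk]
  refine sum_congr rfl fun j _ => ?_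
  simp only [coeff_one_add_C_mul_X_pow]
  ring

section GeneratingFunction

variable {ι M R : Type*} [Fintype ι] [DecidableEq ι] [Zero M] [DecidableEq M]
  [CommSemiring R]

theorem sum_filter_card_support_prod_eq_coeff (t : ι → Finset M) (f : ι → M → R) (ℓ : ℕ) :
    ∑ ω ∈ (Fintype.piFinset t).filter (fun ω => #{i | ω i ≠ 0} = ℓ), ∏ i, f i (ω i) =
      (∏ i, ∑ m ∈ t i, C (f i m) * X ^ (if m ≠ 0 then 1 else 0)).coeff ℓ := by
  rw [prod_univ_sum, finsetSum_coeff, sum_filter]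
  refine sum_congr rfl fun ω _ => ?_
  rw [prod_mul_distrib, ← map_prod, prod_pow_eq_pow_sum, coeff_C_mul_X_pow, ← card_filter]
  exact if_congr eq_comm rfl rfl

theorem sum_filter_card_support_prod_eq_coeff_prod_one_add (S : Finset M) (hS : 0 ∉ S)
    (f : ι → M → R) (hf : ∀ i, f i 0 = 1) (ℓ : ℕ) :
    ∑ ω ∈ (Fintype.piFinset fun _ => insert 0 S).filter (fun ω => #{i | ω i ≠ 0} = ℓ),
        ∏ i, f i (ω i) =
      (∏ i, (1 + C (∑ s ∈ S, f i s) * X)).coeff ℓ := by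
  rw [sum_filter_card_support_prod_eq_coeff]
  congr 1
  refine prod_congr rfl fun i _ => ?_
  rw [sum_insert hS, if_neg (not_not_intro rfl), hf, pow_zero, C_1, one_mul, map_sum, sum_mul]
  congr 1
  refine sum_congr rfl fun s hs => ?_
  rw [if_pos (ne_of_mem_of_not_mem hs hS), pow_one]

end GeneratingFunction

theorem ne_zero_of_two_mul_add_one_eq_zero {R : Type*} [NonAssocRing R] [Nontrivial R] {c : R}
    (h : 2 * c + 1 = 0) : c ≠ 0 := by
  rintro rfl
  rw [mul_zero, zero_add] at h
  exact one_ne_zero h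

theorem ne_neg_self_of_two_mul_add_one_eq_zero {R : Type*} [NonAssocRing R] [Nontrivial R] {c : R}
    (h : 2 * c + 1 = 0) : c ≠ -c := by
  intro hc
  rw [two_mul] at h
  nth_rewrite 2 [hc] at h
  rw [add_neg_cancel, zero_add] at h
  exact one_ne_zero h

namespace ZMod

theorem two_mul_natCast_add_one_eq_zero {q m : ℕ} (hm : 2 * m + 1 = q) :
    2 * (m : ZMod q) + 1 = 0 := by
  exact_mod_cast (natCast_self q ▸ congrArg (Nat.cast : ℕ → ZMod q) hm)

variable {q m : ℕ} [NeZero q]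

theorem stdAddChar_add_stdAddChar_neg_of_two_mul_add_one (hm : 2 * m + 1 = q) :
    stdAddChar (m : ZMod q) + stdAddChar (-(m : ZMod q)) =
      ((-2 * Real.cos (Real.pi / q) : ℝ) : ℂ) := by
  have hangle :
      2 * Real.pi * Complex.I * m / q = ((Real.pi - Real.pi / q : ℝ) : ℂ) * Complex.I := by
    have hq : (q : ℂ) = 2 * m + 1 := by exact_mod_cast hm.symm
    have hq0 : (q : ℂ) ≠ 0 := NeZero.ne _
    push_cast
    field_simp
    rw [hq]
    ring
  rw [AddChar.map_neg_eq_conj, Complex.add_conj, stdAddChar_apply, toCircle_natCast, hangle,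
    Complex.exp_ofReal_mul_I_re, Real.cos_pi_sub]
  push_cast
  ring

theorem stdAddChar_mul_add_stdAddChar_neg_mul_of_two_mul_add_one [Fact (1 < q)]
    (hm : 2 * m + 1 = q) {y : ZMod q} (hy : y = 0 ∨ y = 1 ∨ y = -1) :
    stdAddChar ((m : ZMod q) * y) + stdAddChar (-(m : ZMod q) * y) =
      if y = 0 then 2 else ((-2 * Real.cos (Real.pi / q) : ℝ) : ℂ) := by
  have hpair := stdAddChar_add_stdAddChar_neg_of_two_mul_add_one hm
  rcases hy with rfl | rfl | rfl
  · norm_num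
  · simpa using hpair
  · simpa [add_comm] using hpair

end ZMod

theorem stmt12_general (q : ℕ) [NeZero q] (hq : Odd q) (hq3 : 3 ≤ q) (n u ℓ : ℕ)
    (x : Fin n → ZMod q)
    (hx1 : ∀ i, x i = 0 ∨ x i = 1 ∨ x i = -1)
    (hx2 : (Finset.univ.filter (fun i => x i ≠ 0)).card = u) :
    (∑ ω ∈ Finset.univ.filter (fun ω : Fin n → ZMod q =>
        (∀ i, ω i = 0 ∨ ω i = (((q - 1) / 2 : ℕ) : ZMod q) ∨
            ω i = -(((q - 1) / 2 : ℕ) : ZMod q)) ∧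
        (Finset.univ.filter (fun i => ω i ≠ 0)).card = ℓ),
      Complex.exp (2 * Real.pi * Complex.I * ((((∑ k, ω k * x k : ZMod q)).val : ℂ)) / q)) =
    ((∑ j ∈ Finset.range (ℓ + 1), (u.choose j : ℝ) * ((n - u).choose (ℓ - j) : ℝ) *
        (-1) ^ j * 2 ^ ℓ * Real.cos (Real.pi / q) ^ j : ℝ) : ℂ) := by
  have : Fact (1 < q) := ⟨by omega⟩
  have hm : 2 * ((q - 1) / 2) + 1 = q := by obtain ⟨t, rfl⟩ := hq; omega
  set c : ZMod q := (((q - 1) / 2 : ℕ) : ZMod q)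
  set a : ℂ := ((-2 * Real.cos (Real.pi / q) : ℝ) : ℂ)
  have h2c : 2 * c + 1 = 0 := ZMod.two_mul_natCast_add_one_eq_zero hm
  have hc0 : 0 ∉ ({c, -c} : Finset (ZMod q)) := by
    simpa [eq_comm (a := (0 : ZMod q))] using ne_zero_of_two_mul_add_one_eq_zero h2c
  calc _ = ∑ ω ∈ (Fintype.piFinset fun _ => insert 0 {c, -c}).filter
          (fun ω => #{i | ω i ≠ 0} = ℓ), ∏ i, ZMod.stdAddChar (ω i * x i) := by
        refine sum_congr ?_ fun ω _ => ?_
        · ext ω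
          simp only [mem_filter, mem_univ, true_and, Fintype.mem_piFinset, mem_insert,
            mem_singleton]
        · rw [← ZMod.toCircle_apply, ← ZMod.stdAddChar_apply, AddChar.map_sum_eq_prod]
    _ = (∏ i, (1 + C (∑ s ∈ {c, -c}, ZMod.stdAddChar (s * x i)) * X)).coeff ℓ :=
        sum_filter_card_support_prod_eq_coeff_prod_one_add _ hc0
          (fun i s => ZMod.stdAddChar (s * x i))
          (fun i => by rw [zero_mul, AddChar.map_zero_eq_one]) ℓ
    _ = (∏ i, if x i ≠ 0 then 1 + C a * X else 1 + C 2 * X).coeff ℓ := by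
        congr 1
        refine prod_congr rfl fun i _ => ?_
        rw [sum_pair (ne_neg_self_of_two_mul_add_one_eq_zero h2c),
          ZMod.stdAddChar_mul_add_stdAddChar_neg_mul_of_two_mul_add_one hm (hx1 i)]
        by_cases hxi : x i = 0
        · rw [if_pos hxi, if_neg (not_not.mpr hxi)]
        · rw [if_neg hxi, if_pos hxi]
    _ = ((1 + C a * X) ^ u * (1 + C 2 * X) ^ (n - u)).coeff ℓ := by
        rw [Fintype.prod_ite_eq_pow_mul_pow, hx2, Fintype.card_fin]
    _ = _ := by
        rw [coeff_one_add_C_mul_X_pow_mul_one_add_C_mul_X_pow]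
        simp only [a]
        push_cast
        refine sum_congr rfl fun j hj => ?_
        rw [← pow_mul_pow_sub (2 : ℂ) (Nat.lt_succ_iff.mp (mem_range.mp hj)), neg_mul, neg_pow,
          mul_pow]
        ring

/-- For q odd ≥ 3, c = (q−1)/2, and x in the sphere S_u^1 (exactly u coordinates
equal to ±1, the rest 0), the Fourier transform of the indicator of the sphere
S_ℓ^c (exactly ℓ coordinates equal to ±c, the rest 0) at x equals
Σ_j C(u,j) C(n−u,ℓ−j) (−1)^j 2^ℓ cos(π/q)^j. -/
theorem stmt12 (q : ℕ) [NeZero q] (hq : Odd q) (hq3 : 3 ≤ q) (n u ℓ : ℕ)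
    (hu : u ≤ n) (hℓ : ℓ ≤ n) (x : Fin n → ZMod q)
    (hx1 : ∀ i, x i = 0 ∨ x i = 1 ∨ x i = -1)
    (hx2 : (Finset.univ.filter (fun i => x i ≠ 0)).card = u) :
    (∑ ω ∈ Finset.univ.filter (fun ω : Fin n → ZMod q =>
        (∀ i, ω i = 0 ∨ ω i = (((q - 1) / 2 : ℕ) : ZMod q) ∨
            ω i = -(((q - 1) / 2 : ℕ) : ZMod q)) ∧
        (Finset.univ.filter (fun i => ω i ≠ 0)).card = ℓ),
      Complex.exp (2 * Real.pi * Complex.I * ((((∑ k, ω k * x k : ZMod q)).val : ℂ)) / q)) =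
    ((∑ j ∈ Finset.range (ℓ + 1), (u.choose j : ℝ) * ((n - u).choose (ℓ - j) : ℝ) *
        (-1) ^ j * 2 ^ ℓ * Real.cos (Real.pi / q) ^ j : ℝ) : ℂ) :=
  stmt12_general q hq hq3 n u ℓ x hx1 hx2
end

section
/- Let C ⊆ Z₅^{2n} be the linear code generated by the (n+k)×2n matrix G⁺ = [[I_n, 2I_n],[0, G]] over Z₅, where G is any k×n matrix over Z₅, and for a codeword v = (v₁, v₂) ∈ C let w(v) = Σ_i w((v_{1,i}, v_{2,i})), where w of a pair is w(a)+w(b), w(0)=0, w(±1)=1, w(±2)=∞. Then for fixed ν in the row space of G with Hamming weight d ≥ 1, the number of u₁ ∈ Z₅^n such that the codeword (u₁, 2u₁ + ν) has finite weight d + t is exactly C(d, t), for each t ∈ {0,1,...,d}. -/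
/-- Symbol weight on Z₅: w(0)=0, w(±1)=1, w(±2)=∞. -/
def w5 (x : ZMod 5) : WithTop ℕ := if x = 0 then 0 else if x = 1 ∨ x = -1 then 1 else ⊤

def A5 (c : ZMod 5) : ZMod 5 := if c = 1 then 0 else if c = 2 then 4 else if c = 3 then 1 else 0
def B5 (c : ZMod 5) : ZMod 5 := if c = 2 ∨ c = 4 then 1 else 4

lemma key5 (c a : ZMod 5) (hc : c ≠ 0) :
    w5 a + w5 (2*a+c) = if a = A5 c then (1:WithTop ℕ) else if a = B5 c then 2 else ⊤ := by
  revert hc; revert c a; decide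

lemma key0 (a : ZMod 5) : w5 a + w5 (2*a+0) = if a = 0 then (0:WithTop ℕ) else ⊤ := by
  revert a; decide

lemma ABne (c : ZMod 5) (hc : c ≠ 0) : A5 c ≠ B5 c := by revert hc; revert c; decide


/-- For a fixed ν ∈ Z₅ⁿ of Hamming weight d ≥ 1 and each t ∈ {0,…,d}, the number
of u₁ ∈ Z₅ⁿ such that the codeword (u₁, 2u₁ + ν) of the code generated by
[[I,2I],[0,G]] has finite weight d + t is exactly C(d,t). -/
theorem stmt14 (n : ℕ) (ν : Fin n → ZMod 5) (d : ℕ) (hd : 1 ≤ d)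
    (hν : (Finset.univ.filter (fun i => ν i ≠ 0)).card = d) (t : ℕ) (ht : t ≤ d) :
    Nat.card {u₁ : Fin n → ZMod 5 //
      (∑ i, (w5 (u₁ i) + w5 (2 * u₁ i + ν i))) = ((d + t : ℕ) : WithTop ℕ)} =
      d.choose t := by
  classical
  set s : Finset (Fin n) := Finset.univ.filter (fun i => ν i ≠ 0) with hs
  have hmem : ∀ i, i ∈ s ↔ ν i ≠ 0 := by
    intro i; simp [hs]
  -- sum computation given structure
  have sumcalc : ∀ u : Fin n → ZMod 5, (∀ i, ν i = 0 → u i = 0) →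
      (∀ i ∈ s, u i = A5 (ν i) ∨ u i = B5 (ν i)) →
      (∑ i, (w5 (u i) + w5 (2 * u i + ν i))) =
        ((d + (s.filter (fun i => u i = B5 (ν i))).card : ℕ) : WithTop ℕ) := by
    intro u h1 h2
    rw [← Finset.sum_filter_add_sum_filter_not Finset.univ (fun i => ν i ≠ 0)]
    have hz : ∑ i ∈ Finset.univ.filter (fun i => ¬ ν i ≠ 0),
        (w5 (u i) + w5 (2 * u i + ν i)) = 0 := by
      apply Finset.sum_eq_zero
      intro i hi
      have h0 : ν i = 0 := by simpa using (Finset.mem_filter.1 hi).2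
      rw [h0, h1 i h0]
      decide
    have hterm : ∀ i ∈ s, (w5 (u i) + w5 (2 * u i + ν i)) =
        (((1 + (if u i = B5 (ν i) then 1 else 0) : ℕ)) : WithTop ℕ) := by
      intro i hi
      have hc : ν i ≠ 0 := (hmem i).1 hi
      rw [key5 (ν i) (u i) hc]
      rcases h2 i hi with h | h
      · have hne : u i ≠ B5 (ν i) := h ▸ ABne _ hc
        rw [if_pos h, if_neg hne]
        norm_num
      · have hne : u i ≠ A5 (ν i) := fun hA => ABne _ hc (hA ▸ h)
        rw [if_neg hne, if_pos h, if_pos h]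
        norm_num
    rw [hz, add_zero, Finset.sum_congr rfl hterm, ← Nat.cast_sum]
    congr 1
    rw [Finset.sum_add_distrib, Finset.sum_const, smul_eq_mul, mul_one, hν,
      Finset.card_filter]
  -- characterization
  have char : ∀ u : Fin n → ZMod 5,
      (∑ i, (w5 (u i) + w5 (2 * u i + ν i))) = ((d + t : ℕ) : WithTop ℕ) ↔
      ((∀ i, ν i = 0 → u i = 0) ∧ (∀ i ∈ s, u i = A5 (ν i) ∨ u i = B5 (ν i)) ∧
        (s.filter (fun i => u i = B5 (ν i))).card = t) := by
    intro u
    constructor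
    · intro h
      have hfin : ∀ i : Fin n, w5 (u i) + w5 (2 * u i + ν i) ≠ ⊤ := by
        intro i hi
        have htop : (∑ i, (w5 (u i) + w5 (2 * u i + ν i))) = ⊤ :=
          WithTop.sum_eq_top.2 ⟨i, Finset.mem_univ i, hi⟩
        rw [h] at htop
        exact WithTop.natCast_ne_top _ htop
      have h1 : ∀ i, ν i = 0 → u i = 0 := by
        intro i h0
        have hf := hfin i
        rw [h0, key0] at hf
        by_contra hne
        rw [if_neg hne] at hf
        exact hf rfl
      have h2 : ∀ i ∈ s, u i = A5 (ν i) ∨ u i = B5 (ν i) := by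
        intro i hi
        have hc : ν i ≠ 0 := (hmem i).1 hi
        have hf := hfin i
        rw [key5 (ν i) (u i) hc] at hf
        by_contra hne
        push_neg at hne
        rw [if_neg hne.1, if_neg hne.2] at hf
        exact hf rfl
      refine ⟨h1, h2, ?_⟩
      have := sumcalc u h1 h2
      rw [h] at this
      have hnat := Nat.cast_injective this.symm
      omega
    · rintro ⟨h1, h2, h3⟩
      rw [sumcalc u h1 h2, h3]
  -- the equiv
  have filt : ∀ S : Finset (Fin n), S ⊆ s →
      s.filter (fun i => (if i ∈ S then B5 (ν i) else if ν i = 0 then 0 else A5 (ν i))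
        = B5 (ν i)) = S := by
    intro S hS
    ext i
    simp only [Finset.mem_filter]
    constructor
    · rintro ⟨hi, hv⟩
      by_contra hiS
      have hc : ν i ≠ 0 := (hmem i).1 hi
      rw [if_neg hiS, if_neg hc] at hv
      exact ABne _ hc hv
    · intro hiS
      exact ⟨hS hiS, by rw [if_pos hiS]⟩
  have e : {u₁ : Fin n → ZMod 5 //
      (∑ i, (w5 (u₁ i) + w5 (2 * u₁ i + ν i))) = ((d + t : ℕ) : WithTop ℕ)} ≃
      {S : Finset (Fin n) // S ∈ Finset.powersetCard t s} :=
  { toFun := fun u => ⟨s.filter (fun i => u.1 i = B5 (ν i)), by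
      rw [Finset.mem_powersetCard]
      exact ⟨Finset.filter_subset _ _, ((char u.1).1 u.2).2.2⟩⟩
    invFun := fun S =>
      ⟨fun i => if i ∈ S.1 then B5 (ν i) else if ν i = 0 then 0 else A5 (ν i), by
      obtain ⟨S, hS⟩ := S
      rw [Finset.mem_powersetCard] at hS
      apply (char _).2
      refine ⟨?_, ?_, ?_⟩
      · intro i h0
        have hiS : i ∉ S := fun hi => ((hmem i).1 (hS.1 hi)) h0
        rw [if_neg hiS, if_pos h0]
      · intro i hi
        by_cases hiS : i ∈ S
        · right; rw [if_pos hiS]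
        · left
          have hc : ν i ≠ 0 := (hmem i).1 hi
          rw [if_neg hiS, if_neg hc]
      · rw [filt S hS.1]; exact hS.2⟩
    left_inv := by
      rintro ⟨u, hu⟩
      obtain ⟨h1, h2, h3⟩ := (char u).1 hu
      apply Subtype.ext
      funext i
      simp only []
      by_cases hi : i ∈ s.filter (fun j => u j = B5 (ν j))
      · rw [if_pos hi]; exact ((Finset.mem_filter.1 hi).2).symm
      · rw [if_neg hi]
        by_cases h0 : ν i = 0
        · rw [if_pos h0]; exact (h1 i h0).symm
        · rw [if_neg h0]
          have hisf : i ∈ s := (hmem i).2 h0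
          have hnb : u i ≠ B5 (ν i) := fun hb => hi (Finset.mem_filter.2 ⟨hisf, hb⟩)
          rcases h2 i hisf with h | h
          · exact h.symm
          · exact absurd h hnb
    right_inv := by
      rintro ⟨S, hS⟩
      rw [Finset.mem_powersetCard] at hS
      apply Subtype.ext
      simp only []
      exact filt S hS.1 }
  rw [Nat.card_congr e, Nat.card_eq_finsetCard, Finset.card_powersetCard, hν]
end

section
/- For ρ ≥ 1 with ρ ≤ log 2 / log(2cos(π/5)), the minimum over probability distributions P on Z₅ of the quadratic form Q(ρ, P) = Σ_{x₁,x₂} P(x₁)P(x₂) g(x₁,x₂)^{1/ρ}, where g(x₁,x₂) = 1 if x₁ = x₂, 1/2 if x₁ − x₂ ≡ ±1 (mod 5), 0 otherwise, is attained by the uniform distribution and equals (1 + 2^{1−1/ρ})/5. -/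
/-! With `c = 2^(-1/ρ)` the matrix `(g x₁ x₂ ^ (1/ρ))` is `I + c·A(C₅)`: symmetric with constant
row sums `1 + 2c`. Writing `P = u + d` with `u` uniform and `∑ d = 0`, the cross terms vanish and
`Q(P) = Q(u) + dᵀKd`. The eigenvalues of `K` on sum-zero vectors are `1 + 2c·cos(2πk/5)`, the
smallest being `1 - c·φ` with `φ = 2cos(π/5)` the golden ratio, and the hypothesis on `ρ` is
exactly `c·φ ≤ 1`. -/

open Matrix Real goldenRatio

namespace Matrix

variable {n : Type*} [Fintype n]

theorem sum_sum_mul_mul_eq_dotProduct_mulVec (M : Matrix n n ℝ) (v w : n → ℝ) :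
    ∑ i, ∑ j, v i * w j * M i j = v ⬝ᵥ M *ᵥ w := by
  simp only [dotProduct, mulVec, Finset.mul_sum]
  exact Finset.sum_congr rfl fun i _ => Finset.sum_congr rfl fun j _ => by ring

theorem sum_sub_uniform_eq_zero {P : n → ℝ} (hP : ∑ i, P i = 1) :
    ∑ i, (P - (Fintype.card n : ℝ)⁻¹ • 1) i = 0 := by
  have hcard : (Fintype.card n : ℝ) ≠ 0 := by
    rintro h
    simp [Fintype.card_eq_zero_iff.mp (by exact_mod_cast h)] at hP
  simp [Finset.sum_sub_distrib, hP, hcard]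

variable {M : Matrix n n ℝ} {r : ℝ}

theorem uniform_dotProduct_mulVec_uniform (hrow : M *ᵥ 1 = r • 1) :
    ((Fintype.card n : ℝ)⁻¹ • 1) ⬝ᵥ M *ᵥ ((Fintype.card n : ℝ)⁻¹ • 1) = r / Fintype.card n := by
  rcases eq_or_ne (Fintype.card n : ℝ) 0 with h | h
  · simp [h]
  · rw [mulVec_smul, hrow, smul_smul, smul_dotProduct, dotProduct_smul, one_dotProduct_one]
    simp only [smul_eq_mul]
    field_simp

theorem IsSymm.dotProduct_mulVec_eq_uniform_add (hM : M.IsSymm) (hrow : M *ᵥ 1 = r • 1)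
    {P : n → ℝ} (hP : ∑ i, P i = 1) :
    P ⬝ᵥ M *ᵥ P = r / Fintype.card n +
      (P - (Fintype.card n : ℝ)⁻¹ • 1) ⬝ᵥ M *ᵥ (P - (Fintype.card n : ℝ)⁻¹ • 1) := by
  set u : n → ℝ := (Fintype.card n : ℝ)⁻¹ • 1
  have h_du : (P - u) ⬝ᵥ M *ᵥ u = 0 := by
    rw [mulVec_smul, hrow, dotProduct_smul, dotProduct_smul, dotProduct_one,
      sum_sub_uniform_eq_zero hP, smul_zero, smul_zero]
  have h_ud : u ⬝ᵥ M *ᵥ (P - u) = 0 := by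
    rw [dotProduct_mulVec, ← mulVec_transpose, hM.eq, dotProduct_comm, h_du]
  rw [← uniform_dotProduct_mulVec_uniform hrow]
  conv_lhs => rw [show P = u + (P - u) by abel]
  rw [mulVec_add, add_dotProduct, dotProduct_add, dotProduct_add, h_du, h_ud]
  ring

theorem IsSymm.div_card_le_dotProduct_mulVec (hM : M.IsSymm) (hrow : M *ᵥ 1 = r • 1)
    (hpsd : ∀ d : n → ℝ, ∑ i, d i = 0 → 0 ≤ d ⬝ᵥ M *ᵥ d) {P : n → ℝ} (hP : ∑ i, P i = 1) :
    r / Fintype.card n ≤ P ⬝ᵥ M *ᵥ P := by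
  rw [hM.dotProduct_mulVec_eq_uniform_add hrow hP]
  exact le_add_of_nonneg_right (hpsd _ (sum_sub_uniform_eq_zero hP))

end Matrix

theorem ZMod.sum_univ_five {M : Type*} [AddCommMonoid M] (f : ZMod 5 → M) :
    ∑ i, f i = f 0 + f 1 + f 2 + f 3 + f 4 :=
  Fin.sum_univ_five f

theorem goldenRatio_mul_sum_sq_add_two_mul_sum_mul_succ_nonneg (d : ZMod 5 → ℝ)
    (hd : ∑ i, d i = 0) : 0 ≤ φ * ∑ i, d i ^ 2 + 2 * ∑ i, d i * d (i + 1) := by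
  have key : (φ + 2) * (φ * ∑ i, d i ^ 2 + 2 * ∑ i, d i * d (i + 1)) =
      φ * ∑ i, (d (i - 1) + φ * d i + d (i + 1)) ^ 2 := by
    -- on `ZMod 5` the distance-two products are determined by `(∑ d)²`, `∑ d²` and the
    -- distance-one products, which is where `hd` enters
    simp only [ZMod.sum_univ_five] at hd ⊢
    simp only [show (4 : ZMod 5) + 1 = 0 from rfl, show (0 : ZMod 5) - 1 = 4 from rfl]
    norm_num only
    linear_combination
      (-(φ * (d 0 ^ 2 + d 1 ^ 2 + d 2 ^ 2 + d 3 ^ 2 + d 4 ^ 2) +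
        4 * (d 0 * d 1 + d 1 * d 2 + d 2 * d 3 + d 3 * d 4 + d 4 * d 0))) * goldenRatio_sq
      - φ * (d 0 + d 1 + d 2 + d 3 + d 4) * hd
  refine nonneg_of_mul_nonneg_right ?_ (by linarith [goldenRatio_pos] : (0 : ℝ) < φ + 2)
  rw [key]
  positivity

def pentagonKernel (c : ℝ) : Matrix (ZMod 5) (ZMod 5) ℝ :=
  Matrix.of fun x y => if x = y then 1 else if x - y = 1 ∨ x - y = -1 then c else 0

section pentagonKernel

variable (c : ℝ)

theorem pentagonKernel_apply (x y : ZMod 5) :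
    pentagonKernel c x y = if x = y then 1 else if x - y = 1 ∨ x - y = -1 then c else 0 :=
  rfl

theorem pentagonKernel_isSymm : (pentagonKernel c).IsSymm := by
  ext x y
  simp only [transpose_apply, pentagonKernel_apply, eq_comm (a := x), ← neg_sub x y,
    neg_eq_iff_eq_neg, neg_neg, or_comm]

theorem pentagonKernel_mulVec_one : pentagonKernel c *ᵥ 1 = (1 + 2 * c) • 1 := by
  ext x
  have hrow : ∑ y, pentagonKernel c x y = ∑ z, pentagonKernel c z 0 :=
    Fintype.sum_equiv (Equiv.subLeft x) _ _ fun y => by simp [pentagonKernel_apply, sub_eq_zero]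
  simp only [mulVec, dotProduct, Pi.one_apply, mul_one, hrow, ZMod.sum_univ_five]
  simp +decide [pentagonKernel_apply]
  ring

theorem pentagonKernel_dotProduct_mulVec (d : ZMod 5 → ℝ) :
    d ⬝ᵥ pentagonKernel c *ᵥ d = ∑ i, d i ^ 2 + 2 * c * ∑ i, d i * d (i + 1) := by
  simp only [dotProduct, mulVec, ZMod.sum_univ_five, show (1 : ZMod 5) + 1 = 2 from rfl,
    show (2 : ZMod 5) + 1 = 3 from rfl, show (3 : ZMod 5) + 1 = 4 from rfl,
    show (4 : ZMod 5) + 1 = 0 from rfl, zero_add]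
  simp +decide [pentagonKernel_apply]
  ring

end pentagonKernel

theorem pentagonKernel_dotProduct_mulVec_nonneg {c : ℝ} (hc₀ : 0 ≤ c) (hc : c * φ ≤ 1)
    {d : ZMod 5 → ℝ} (hd : ∑ i, d i = 0) : 0 ≤ d ⬝ᵥ pentagonKernel c *ᵥ d := by
  have hsq : 0 ≤ ∑ i, d i ^ 2 := by positivity
  calc 0 ≤ (1 - c * φ) * ∑ i, d i ^ 2 + c * (φ * ∑ i, d i ^ 2 + 2 * ∑ i, d i * d (i + 1)) :=
        add_nonneg (mul_nonneg (by linarith) hsq)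
          (mul_nonneg hc₀ (goldenRatio_mul_sum_sq_add_two_mul_sum_mul_succ_nonneg d hd))
    _ = d ⬝ᵥ pentagonKernel c *ᵥ d := by rw [pentagonKernel_dotProduct_mulVec]; ring

theorem two_mul_cos_pi_div_five : 2 * cos (π / 5) = φ := by
  rw [cos_pi_div_five, goldenRatio]; ring

theorem Real.le_rpow_one_div_of_le_log_div_log {a b ρ : ℝ} (ha : 1 < a) (hb : 0 < b) (hρ : 0 < ρ)
    (h : ρ ≤ log b / log a) : a ≤ b ^ (1 / ρ) := by
  rw [le_div_iff₀ (log_pos ha)] at h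
  rw [le_rpow_iff_log_le (by linarith) hb, one_div, inv_mul_eq_div, le_div_iff₀ hρ, mul_comm]
  exact h

/-- For 1 ≤ ρ ≤ log 2 / log(2cos(π/5)), the quadratic form
Q(ρ,P) = Σ P(x₁)P(x₂) g(x₁,x₂)^{1/ρ} over probability vectors P on Z₅ is minimized
by the uniform distribution, with minimum (1 + 2^{1−1/ρ})/5. -/
theorem stmt15 (ρ : ℝ) (h1 : 1 ≤ ρ)
    (h2 : ρ ≤ Real.log 2 / Real.log (2 * Real.cos (Real.pi / 5)))
    (g : ZMod 5 → ZMod 5 → ℝ)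
    (hg : ∀ x₁ x₂, g x₁ x₂ =
      if x₁ = x₂ then 1 else if x₁ - x₂ = 1 ∨ x₁ - x₂ = -1 then 1 / 2 else 0) :
    (∀ P : ZMod 5 → ℝ, (∀ x, 0 ≤ P x) → (∑ x, P x = 1) →
      (1 + (2 : ℝ) ^ (1 - 1 / ρ)) / 5 ≤
        ∑ x₁ : ZMod 5, ∑ x₂ : ZMod 5, P x₁ * P x₂ * g x₁ x₂ ^ (1 / ρ)) ∧
    (∑ x₁ : ZMod 5, ∑ x₂ : ZMod 5, (1 / 5 : ℝ) * (1 / 5) * g x₁ x₂ ^ (1 / ρ) =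
      (1 + (2 : ℝ) ^ (1 - 1 / ρ)) / 5) := by
  have hρ : 0 < ρ := by linarith
  set c : ℝ := (1 / 2) ^ (1 / ρ) with hc
  have hcφ : c * φ ≤ 1 := by
    have := le_rpow_one_div_of_le_log_div_log one_lt_goldenRatio two_pos hρ
      (two_mul_cos_pi_div_five ▸ h2)
    rw [hc, div_rpow zero_le_one zero_le_two, one_rpow, one_div_mul_eq_div]
    exact div_le_one_of_le₀ this (by positivity)
  have hpow : (2 : ℝ) ^ (1 - 1 / ρ) = 2 * c := by
    rw [rpow_sub two_pos, rpow_one, hc, div_rpow zero_le_one zero_le_two, one_rpow, mul_one_div]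
  have hK : ∀ x y, g x y ^ (1 / ρ) = pentagonKernel c x y := by
    intro x y
    rw [hg, pentagonKernel_apply]
    split_ifs
    · exact one_rpow _
    · rfl
    · exact zero_rpow (by positivity)
  simp_rw [hK, sum_sum_mul_mul_eq_dotProduct_mulVec, hpow]
  constructor
  · intro P _ hP
    simpa using (pentagonKernel_isSymm c).div_card_le_dotProduct_mulVec
      (pentagonKernel_mulVec_one c)
      (fun d hd => pentagonKernel_dotProduct_mulVec_nonneg (by positivity) hcφ hd) hP
  · have huniform : (fun _ => 1 / 5 : ZMod 5 → ℝ) = (Fintype.card (ZMod 5) : ℝ)⁻¹ • 1 := by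
      ext; simp
    rw [huniform, uniform_dotProduct_mulVec_uniform (pentagonKernel_mulVec_one c), ZMod.card,
      Nat.cast_ofNat]
end
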